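/- arXiv:0906.2749 — 3 statements merged into one kernel-verified Lean document; each statement's English description precedes it below -/
import Mathlib

section
/- For every natural number n ≥ 2, one has n/(4·log n) ≤ φ(n) ≤ n − 1, where φ is Euler's totient function. -/
/-!
By Euler's product, `φ n = n ∏_{p ∣ n} (1 - 1/p)`. If `n` has `k` distinct prime factors, the
`i`-th smallest is at least `i + 1`, so the product is at least `∏ i/(i+1) = 1/(k+1)`. Since
`2 ^ k ≤ n` and `log 2 > 1/2`, `k + 1 ≤ 4 log n`. The upper bound is `φ n < n` for `n > 1`.
-/

open Finset

theorem inv_card_add_one_le_prod_one_sub_inv {K : Type*} [Field K] [LinearOrder K]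
    [IsStrictOrderedRing K] (s : Finset ℕ) (hs : ∀ p ∈ s, 2 ≤ p) :
    ((#s : K) + 1)⁻¹ ≤ ∏ p ∈ s, (1 - (p : K)⁻¹) := by
  induction s using Finset.induction_on_max with
  | empty => simp
  | insert a s hlt ih =>
    have ha : a ∉ s := fun h => (hlt a h).false
    have hcard : #s + 2 ≤ a := by
      have h2 : s ⊆ Ico 2 a := fun p hp => mem_Ico.2 ⟨hs p (mem_insert_of_mem hp), hlt p hp⟩
      have hs_le : #s ≤ a - 2 := by simpa only [Nat.card_Ico] using card_le_card h2
      have ha2 := hs a (mem_insert_self a s)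
      omega
    have hcardK : (#s : K) + 2 ≤ a := by exact_mod_cast hcard
    have ha1 : (1 : K) ≤ a := by exact_mod_cast (show 1 ≤ a by omega)
    rw [prod_insert ha, card_insert_of_notMem ha, Nat.cast_succ]
    calc ((#s : K) + 1 + 1)⁻¹ = (1 - ((#s : K) + 2)⁻¹) * ((#s : K) + 1)⁻¹ := by
          field_simp; ring
      _ ≤ (1 - (a : K)⁻¹) * ∏ p ∈ s, (1 - (p : K)⁻¹) := by
          gcongr
          · exact sub_nonneg.2 (inv_le_one_of_one_le₀ ha1)
          · exact ih fun p hp => hs p (mem_insert_of_mem hp)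

theorem div_card_primeFactors_add_one_le_totient (n : ℕ) :
    (n : ℝ) / (#n.primeFactors + 1) ≤ n.totient := by
  have hprod := inv_card_add_one_le_prod_one_sub_inv (K := ℚ) n.primeFactors
    fun p hp => (Nat.prime_of_mem_primeFactors hp).two_le
  have hq : (n : ℚ) / (#n.primeFactors + 1) ≤ n.totient := by
    rw [Nat.totient_eq_mul_prod_factors, div_eq_mul_inv]
    gcongr
  simpa using (Rat.cast_le (K := ℝ)).2 hq

theorem two_pow_card_primeFactors_le {n : ℕ} (hn : n ≠ 0) : 2 ^ #n.primeFactors ≤ n :=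
  calc 2 ^ #n.primeFactors ≤ ∏ p ∈ n.primeFactors, p :=
        pow_card_le_prod _ _ _ fun _ hp => (Nat.prime_of_mem_primeFactors hp).two_le
    _ ≤ n := Nat.le_of_dvd (Nat.pos_of_ne_zero hn) n.prod_primeFactors_dvd

theorem card_primeFactors_add_one_le_four_mul_log {n : ℕ} (hn : 2 ≤ n) :
    (#n.primeFactors : ℝ) + 1 ≤ 4 * Real.log n := by
  have hlog2 : 1 / 2 < Real.log 2 := lt_trans (by norm_num) Real.log_two_gt_d9
  have hk : (#n.primeFactors : ℝ) * Real.log 2 ≤ Real.log n := by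
    rw [← Real.log_pow]
    exact Real.log_le_log (by positivity)
      (by exact_mod_cast two_pow_card_primeFactors_le (by omega))
  have h2 : Real.log 2 ≤ Real.log n := Real.log_le_log (by norm_num) (by exact_mod_cast hn)
  nlinarith

theorem totient_bounds (n : ℕ) (hn : 2 ≤ n) :
    (n : ℝ) / (4 * Real.log n) ≤ (Nat.totient n : ℝ) ∧
    (Nat.totient n : ℝ) ≤ (n : ℝ) - 1 := by
  constructor
  · calc (n : ℝ) / (4 * Real.log n) ≤ n / (#n.primeFactors + 1) := by
          gcongr
          exact card_primeFactors_add_one_le_four_mul_log hn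
      _ ≤ n.totient := div_card_primeFactors_add_one_le_totient n
  · have : n.totient + 1 ≤ n := Nat.totient_lt n hn
    rw [le_sub_iff_add_le]
    exact_mod_cast this
end

section
/- Let γ > 0 and let f be as above (the autoconvolution of g(x) = max(γ² − x², 0)). For every z ∈ ℂ with z ≠ 0, the Laplace transform satisfies F(z) = (16γ⁵/15)·z⁻¹ − (8γ³/3)·z⁻³ + 4γ²·(1 + e^{−2γz})·z⁻⁴ + 4·z⁻⁶·(−1 + e^{−2γz} + 2γz·e^{−2γz}). -/
/-!
On `[0, 2γ]` the function `f` is the quintic `p = autoconvPoly γ`, which vanishes at `2γ`,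
and `f = 0` beyond `2γ`, so `F z = ∫ t in 0..2γ, exp (-z t) p t`. Repeated integration by
parts shows that `exp (-z t) Q t` with `Q = -∑_{k ≤ 5} p^{(k)} / z^{k+1}` is an antiderivative
of `exp (-z t) p t`, because `p^{(6)} = 0`. Hence `F z = exp (-2γz) Q (2γ) - Q 0`, and at
`t = 2γ` only `p'''`, `p''''` and `p^{(5)}` contribute.
-/

open MeasureTheory Polynomial

noncomputable def expAntideriv (z : ℂ) (n : ℕ) (p : ℂ[X]) : ℂ[X] :=
  -∑ k ∈ Finset.range n, (z ^ (k + 1))⁻¹ • derivative^[k] p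

theorem derivative_expAntideriv_sub_smul {z : ℂ} (hz : z ≠ 0) (n : ℕ) (p : ℂ[X]) :
    derivative (expAntideriv z n p) - z • expAntideriv z n p
      = p - (z ^ n)⁻¹ • derivative^[n] p := by
  have hz_mul : ∀ k : ℕ, z * (z ^ (k + 1))⁻¹ = (z ^ k)⁻¹ := fun k => by
    rw [pow_succ]; field_simp
  calc derivative (expAntideriv z n p) - z • expAntideriv z n p
      = ∑ k ∈ Finset.range n, ((z ^ k)⁻¹ • derivative^[k] p
          - (z ^ (k + 1))⁻¹ • derivative^[k + 1] p) := by
        simp only [expAntideriv, derivative_neg, derivative_sum, derivative_smul,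
          Finset.smul_sum, smul_neg, smul_smul, hz_mul, Function.iterate_succ_apply',
          Finset.sum_sub_distrib]
        abel
    _ = p - (z ^ n)⁻¹ • derivative^[n] p := by
        rw [Finset.sum_range_sub' (fun k => (z ^ k)⁻¹ • derivative^[k] p)]
        simp

theorem integral_cexp_neg_mul_mul_eval {z : ℂ} (hz : z ≠ 0) {p : ℂ[X]} {n : ℕ}
    (hn : p.natDegree < n) (a b : ℝ) :
    ∫ t in a..b, Complex.exp (-z * t) * p.eval (t : ℂ)
      = Complex.exp (-z * b) * (expAntideriv z n p).eval (b : ℂ)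
        - Complex.exp (-z * a) * (expAntideriv z n p).eval (a : ℂ) := by
  set Q := expAntideriv z n p
  have hQ : derivative Q - z • Q = p := by
    rw [derivative_expAntideriv_sub_smul hz, iterate_derivative_eq_zero hn, smul_zero, sub_zero]
  have hderiv : ∀ t : ℝ, HasDerivAt (fun t : ℝ => Complex.exp (-z * t) * Q.eval (t : ℂ))
      (Complex.exp (-z * t) * p.eval (t : ℂ)) t := by
    intro t
    have h := ((((hasDerivAt_id (t : ℂ)).const_mul (-z)).cexp).mul
      (Q.hasDerivAt (t : ℂ))).comp_ofReal
    refine h.congr_deriv ?_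
    rw [← hQ]
    simp only [eval_sub, eval_smul, smul_eq_mul, id_eq]
    ring
  have hcont : Continuous fun t : ℝ => Complex.exp (-z * t) * p.eval (t : ℂ) := by fun_prop
  exact intervalIntegral.integral_eq_sub_of_hasDerivAt (fun t _ => hderiv t)
    (hcont.intervalIntegrable a b)

noncomputable def autoconvPoly (γ : ℂ) : ℂ[X] :=
  C (-1 / 30) * X ^ 5 + C (2 * γ ^ 2 / 3) * X ^ 3 - C (4 * γ ^ 3 / 3) * X ^ 2 + C (16 * γ ^ 5 / 15)

theorem natDegree_autoconvPoly_lt (γ : ℂ) : (autoconvPoly γ).natDegree < 6 :=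
  Nat.lt_succ_of_le (by unfold autoconvPoly; compute_degree)

theorem eval_autoconvPoly_two_mul (γ : ℂ) : (autoconvPoly γ).eval (2 * γ) = 0 := by
  simp only [autoconvPoly, eval_add, eval_sub, eval_mul, eval_C, eval_pow, eval_X]
  ring

theorem eval_autoconvPoly_ofReal (γ t : ℝ) :
    (autoconvPoly γ).eval (t : ℂ)
      = ((-t ^ 5 / 30 + (2 * γ ^ 2 / 3) * t ^ 3 - (4 * γ ^ 3 / 3) * t ^ 2 + 16 * γ ^ 5 / 15 : ℝ)
        : ℂ) := by
  simp only [autoconvPoly, eval_add, eval_sub, eval_mul, eval_C, eval_pow, eval_X]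
  push_cast
  ring

theorem eval_expAntideriv_autoconvPoly_zero {z : ℂ} (γ : ℂ) :
    (expAntideriv z 6 (autoconvPoly γ)).eval 0
      = -(16 * γ ^ 5 / 15) / z + (8 * γ ^ 3 / 3) / z ^ 3 - 4 * γ ^ 2 / z ^ 4 + 4 / z ^ 6 := by
  simp only [expAntideriv, autoconvPoly, Finset.sum_range_succ, Finset.sum_range_zero,
    Function.iterate_succ_apply', Function.iterate_zero_apply, derivative_add, derivative_sub,
    derivative_C_mul_X_pow, derivative_C, derivative_zero, eval_neg, eval_add, eval_sub,
    eval_smul, eval_mul, eval_C, eval_pow, eval_X, eval_zero, smul_eq_mul, Nat.cast_ofNat]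
  ring

theorem eval_expAntideriv_autoconvPoly_two_mul {z : ℂ} (γ : ℂ) :
    (expAntideriv z 6 (autoconvPoly γ)).eval (2 * γ)
      = 4 * γ ^ 2 / z ^ 4 + 8 * γ / z ^ 5 + 4 / z ^ 6 := by
  simp only [expAntideriv, autoconvPoly, Finset.sum_range_succ, Finset.sum_range_zero,
    Function.iterate_succ_apply', Function.iterate_zero_apply, derivative_add, derivative_sub,
    derivative_C_mul_X_pow, derivative_C, derivative_zero, eval_neg, eval_add, eval_sub,
    eval_smul, eval_mul, eval_C, eval_pow, eval_X, eval_zero, smul_eq_mul, Nat.cast_ofNat]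
  ring

theorem laplace_transform_formula (γ : ℝ) (hγ : 0 < γ)
    (f : ℝ → ℝ)
    (hf : ∀ t : ℝ, 0 ≤ t → t < 2 * γ →
      f t = -t ^ 5 / 30 + (2 * γ ^ 2 / 3) * t ^ 3 - (4 * γ ^ 3 / 3) * t ^ 2
        + 16 * γ ^ 5 / 15)
    (hf0 : ∀ t : ℝ, 2 * γ ≤ t → f t = 0)
    (F : ℂ → ℂ)
    (hF : ∀ z : ℂ, F z = ∫ t in Set.Ioi (0 : ℝ), Complex.exp (-z * t) * (f t : ℂ)) :
    ∀ z : ℂ, z ≠ 0 →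
      F z = (16 * (γ : ℂ) ^ 5 / 15) / z - (8 * (γ : ℂ) ^ 3 / 3) / z ^ 3
        + 4 * (γ : ℂ) ^ 2 * (1 + Complex.exp (-2 * γ * z)) / z ^ 4
        + 4 / z ^ 6 * (-1 + Complex.exp (-2 * γ * z)
            + 2 * γ * z * Complex.exp (-2 * γ * z)) := by
  intro z hz
  have hpoly : ∀ t ∈ Set.Ioc 0 (2 * γ), (f t : ℂ) = (autoconvPoly γ).eval (t : ℂ) := by
    rintro t ⟨ht0, ht⟩
    rcases ht.lt_or_eq with ht | rfl
    · rw [hf t ht0.le ht, eval_autoconvPoly_ofReal]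
    · rw [hf0 _ le_rfl, Complex.ofReal_mul, Complex.ofReal_ofNat, eval_autoconvPoly_two_mul,
        Complex.ofReal_zero]
  have hvanish : ∀ t ∈ Set.Ioi 0 \ Set.Ioc 0 (2 * γ), Complex.exp (-z * t) * (f t : ℂ) = 0 := by
    rintro t ⟨ht0, ht⟩
    rw [hf0 t (not_le.mp fun h => ht ⟨ht0, h⟩).le, Complex.ofReal_zero, mul_zero]
  rw [hF, setIntegral_eq_of_subset_of_forall_sdiff_eq_zero measurableSet_Ioi
      Set.Ioc_subset_Ioi_self hvanish,
    setIntegral_congr_fun measurableSet_Ioc fun t ht => by rw [hpoly t ht],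
    ← intervalIntegral.integral_of_le (by positivity),
    integral_cexp_neg_mul_mul_eval hz (natDegree_autoconvPoly_lt γ)]
  push_cast
  rw [eval_expAntideriv_autoconvPoly_two_mul, eval_expAntideriv_autoconvPoly_zero,
    mul_zero, Complex.exp_zero, show -z * (2 * γ) = -2 * γ * z by ring]
  field_simp
  ring
end

section
/- Let g : ℝ → ℝ be continuous with g(−x) = g(x), g(x) ≥ 0 for all x, and g(x) = 0 for |x| ≥ γ for some γ > 0. Let f(t) = ∫_{-∞}^{∞} g(x)·g(t−x) dx and let F(z) = ∫_0^∞ e^{−zt} f(t) dt be its Laplace transform. Then for every real y, Re F(iy) = 2·(∫_0^∞ g(t)·cos(ty) dt)² ≥ 0. -/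
open MeasureTheory

lemma even_integral_aux (h : ℝ → ℝ) (hh : ∀ x : ℝ, h (-x) = h x) :
    (∫ x : ℝ, h x) = 2 * ∫ x in Set.Ioi (0 : ℝ), h x := by
  have habs : ∀ x : ℝ, h |x| = h x := by
    intro x
    rcases abs_choice x with h1 | h1 <;> rw [h1]
    exact hh x
  calc (∫ x : ℝ, h x) = ∫ x : ℝ, h |x| := by simp_rw [habs]
    _ = 2 * ∫ x in Set.Ioi (0 : ℝ), h x := integral_comp_abs

theorem re_F_iy_nonneg (γ : ℝ) (hγ : 0 < γ)
    (g : ℝ → ℝ) (hgc : Continuous g)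
    (hgeven : ∀ x : ℝ, g (-x) = g x)
    (hgpos : ∀ x : ℝ, 0 ≤ g x)
    (hgsupp : ∀ x : ℝ, γ ≤ |x| → g x = 0)
    (f : ℝ → ℝ) (hf : ∀ t : ℝ, f t = ∫ x : ℝ, g x * g (t - x)) :
    ∀ y : ℝ,
      (∫ t in Set.Ioi (0 : ℝ), f t * Real.cos (y * t))
        = 2 * (∫ t in Set.Ioi (0 : ℝ), g t * Real.cos (t * y)) ^ 2 ∧
      0 ≤ ∫ t in Set.Ioi (0 : ℝ), f t * Real.cos (y * t) := by
  intro y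
  -- compact support of g
  have hKg : HasCompactSupport g := by
    apply HasCompactSupport.intro (isCompact_Icc (a := -γ) (b := γ))
    intro x hx
    apply hgsupp
    rw [Set.mem_Icc, not_and_or, not_le, not_le] at hx
    rcases hx with hx | hx
    · rw [abs_of_neg (by linarith)]; linarith
    · rw [abs_of_pos (by linarith)]; linarith
  -- integrability of g·cos and g·sin
  have hccos : Continuous fun t : ℝ => g t * Real.cos (y * t) :=
    hgc.mul (Real.continuous_cos.comp (continuous_const.mul continuous_id))
  have hcsin : Continuous fun t : ℝ => g t * Real.sin (y * t) :=
    hgc.mul (Real.continuous_sin.comp (continuous_const.mul continuous_id))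
  have hintcos : Integrable (fun t : ℝ => g t * Real.cos (y * t)) :=
    hccos.integrable_of_hasCompactSupport hKg.mul_right
  have hintsin : Integrable (fun t : ℝ => g t * Real.sin (y * t)) :=
    hcsin.integrable_of_hasCompactSupport hKg.mul_right
  set C : ℝ := ∫ t : ℝ, g t * Real.cos (y * t) with hC
  set S : ℝ := ∫ t : ℝ, g t * Real.sin (y * t) with hSdef
  -- S = 0 by oddness
  have hS : S = 0 := by
    have h1 : (∫ t : ℝ, g (-t) * Real.sin (y * -t)) = ∫ t : ℝ, g t * Real.sin (y * t) :=
      integral_neg_eq_self (fun t : ℝ => g t * Real.sin (y * t)) volume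
    have h2 : ∀ t : ℝ, g (-t) * Real.sin (y * -t) = -(g t * Real.sin (y * t)) := by
      intro t; rw [hgeven, mul_neg, Real.sin_neg]; ring
    simp_rw [h2, integral_neg] at h1
    rw [hSdef]
    linarith [h1]
  -- f is even
  have hfeven : ∀ t : ℝ, f (-t) = f t := by
    intro t
    rw [hf, hf]
    have h1 : (∫ x : ℝ, g (-x) * g (-t - -x)) = ∫ x : ℝ, g x * g (-t - x) :=
      integral_neg_eq_self (fun x : ℝ => g x * g (-t - x)) volume
    have h2 : ∀ x : ℝ, g (-x) * g (-t - -x) = g x * g (t - x) := by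
      intro x
      rw [hgeven, show (-t - -x) = -(t - x) by ring, hgeven]
    simp_rw [h2] at h1
    exact h1.symm
  -- product integrability for Fubini
  set Φ : ℝ × ℝ → ℝ := fun p => g p.2 * g (p.1 - p.2) * Real.cos (y * p.1) with hΦ
  have hΦc : Continuous Φ :=
    ((hgc.comp continuous_snd).mul (hgc.comp (continuous_fst.sub continuous_snd))).mul
      (Real.continuous_cos.comp (continuous_const.mul continuous_fst))
  have hΦK : HasCompactSupport Φ := by
    apply HasCompactSupport.intro
      ((isCompact_Icc (a := -(2*γ)) (b := 2*γ)).prod (isCompact_Icc (a := -γ) (b := γ)))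
    rintro ⟨t, x⟩ hp
    by_cases hx : γ ≤ |x|
    · have hz : g x = 0 := hgsupp x hx
      simp only [hΦ]; rw [hz]; ring
    · push_neg at hx
      have hxm : x ∈ Set.Icc (-γ) γ := by
        rw [Set.mem_Icc]
        constructor
        · linarith [neg_abs_le x]
        · linarith [le_abs_self x]
      have ht : t ∉ Set.Icc (-(2*γ)) (2*γ) := fun h => hp (Set.mem_prod.mpr ⟨h, hxm⟩)
      have h2 : 2*γ < |t| := by
        rw [Set.mem_Icc, not_and_or, not_le, not_le] at ht
        rcases ht with h | h
        · rw [abs_of_neg (by nlinarith)]; linarith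
        · rw [abs_of_pos (by nlinarith)]; linarith
      have hz : γ ≤ |t - x| := by
        have := abs_sub_abs_le_abs_sub t x
        linarith
      simp only [hΦ]; rw [hgsupp _ hz]; ring
  have hΦint : Integrable Φ := hΦc.integrable_of_hasCompactSupport hΦK
  -- Fubini
  have hswap : (∫ t : ℝ, ∫ x : ℝ, g x * g (t - x) * Real.cos (y * t))
      = ∫ x : ℝ, ∫ t : ℝ, g x * g (t - x) * Real.cos (y * t) := by
    apply integral_integral_swap
    rw [← Measure.volume_eq_prod]
    exact hΦint
  -- rewrite the t-integral using hf
  have step1 : (∫ t : ℝ, f t * Real.cos (y * t))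
      = ∫ t : ℝ, ∫ x : ℝ, g x * g (t - x) * Real.cos (y * t) := by
    simp_rw [hf, ← integral_mul_const]
  -- inner integral computation
  have inner : ∀ x : ℝ, (∫ t : ℝ, g x * g (t - x) * Real.cos (y * t))
      = (g x * Real.cos (y * x)) * C - (g x * Real.sin (y * x)) * S := by
    intro x
    have h1 : (∫ t : ℝ, g x * g (t + x - x) * Real.cos (y * (t + x)))
        = ∫ t : ℝ, g x * g (t - x) * Real.cos (y * t) :=
      integral_add_right_eq_self (fun t : ℝ => g x * g (t - x) * Real.cos (y * t)) x
    rw [← h1]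
    have h2 : ∀ t : ℝ, g x * g (t + x - x) * Real.cos (y * (t + x))
        = (g x * Real.cos (y * x)) * (g t * Real.cos (y * t))
          - (g x * Real.sin (y * x)) * (g t * Real.sin (y * t)) := by
      intro t
      rw [add_sub_cancel_right, mul_add, Real.cos_add]
      ring
    simp_rw [h2]
    rw [integral_sub (hintcos.const_mul _) (hintsin.const_mul _),
      integral_const_mul, integral_const_mul, ← hC, ← hSdef]
  -- the full integral
  have hM : (∫ t : ℝ, f t * Real.cos (y * t)) = C * C - S * S := by
    rw [step1, hswap]
    simp_rw [inner]
    rw [integral_sub (hintcos.mul_const _) (hintsin.mul_const _),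
      integral_mul_const, integral_mul_const, ← hC, ← hSdef]
  -- relate C to the half-line integral
  have hC2 : C = 2 * ∫ t in Set.Ioi (0 : ℝ), g t * Real.cos (t * y) := by
    have he : ∀ t : ℝ, g (-t) * Real.cos (y * -t) = g t * Real.cos (y * t) := by
      intro t; rw [hgeven, mul_neg, Real.cos_neg]
    rw [hC, even_integral_aux _ he]
    congr 1
    simp_rw [mul_comm y]
  -- half-line integral of f·cos
  have hhalf : (∫ t in Set.Ioi (0 : ℝ), f t * Real.cos (y * t))
      = (∫ t : ℝ, f t * Real.cos (y * t)) / 2 := by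
    have he : ∀ t : ℝ, f (-t) * Real.cos (y * -t) = f t * Real.cos (y * t) := by
      intro t; rw [hfeven, mul_neg, Real.cos_neg]
    rw [even_integral_aux (fun t : ℝ => f t * Real.cos (y * t)) he]
    ring
  have hmain : (∫ t in Set.Ioi (0 : ℝ), f t * Real.cos (y * t))
      = 2 * (∫ t in Set.Ioi (0 : ℝ), g t * Real.cos (t * y)) ^ 2 := by
    rw [hhalf, hM, hS]
    rw [show C * C - 0 * 0 = C * C by ring,
      show C * C / 2 = C^2/2 by ring, hC2]
    ring
  exact ⟨hmain, hmain ▸ by positivity⟩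
end
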